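/- arXiv:1809.10588 — 6 statements merged into one kernel-verified Lean document; each statement's English description precedes it below -/
import Mathlib

section
/- Let V be a finite set with at least 3 elements and f : V × V → {1,-1} a symmetric function. Then f satisfies f(i,j)·f(j,k)·f(k,ℓ)·f(ℓ,i) = 1 for all distinct i,j,k,ℓ if and only if there exist a constant θ ∈ {1,-1} and a function α : V → {1,-1} such that f(i,j) = θ·α(i)·α(j) for all distinct i,j. -/
lemma aux1 (x y w : ℤˣ) : y = x * y * w * w * x := by revert x y w; decide

lemma aux2 (p q r s x : ℤˣ) (h : p * q * r * s = 1) : s = x * r * q * p * x := by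
  revert h; revert p q r s x; decide

lemma aux3 (t x : ℤˣ) : x = t * 1 * (t * x) := by revert t x; decide

lemma aux4 (t x : ℤˣ) : x = t * (t * x) * 1 := by revert t x; decide

lemma aux5 (t p x s : ℤˣ) (h : s = t * p * x) : s = t * (t * x) * (t * p) := by
  revert h; revert t p x s; decide

lemma aux6 (t p x s : ℤˣ) (h : s = t * p * x) : s = t * (t * p) * (t * x) := by
  revert h; revert t p x s; decide

lemma aux7 (u v x w p t : ℤˣ) (h1 : u * v * x * w = 1) (h2 : w = t * p * x) :
    u = t * (t * p) * (t * v) := by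
  revert h1 h2; revert u v x w p t; decide

theorem stmt_2 {V : Type*} [Fintype V] [DecidableEq V] (h3 : 3 ≤ Fintype.card V)
    (f : V → V → ℤˣ) (hsymm : ∀ i j, f i j = f j i) :
    (∀ i j k l : V, i ≠ j → i ≠ k → i ≠ l → j ≠ k → j ≠ l → k ≠ l →
        f i j * f j k * f k l * f l i = 1) ↔
      ∃ (θ : ℤˣ) (α : V → ℤˣ), ∀ i j : V, i ≠ j → f i j = θ * α i * α j := by
  constructor
  · intro h
    obtain ⟨a, b, hab⟩ :=
      Fintype.exists_pair_of_one_lt_card (show 1 < Fintype.card V by omega)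
    have hc : ∃ c, c ∉ ({a, b} : Finset V) := by
      by_contra hc
      push_neg at hc
      have h1 : (Finset.univ : Finset V) ⊆ {a, b} := fun x _ => hc x
      have h2 := Finset.card_le_card h1
      have h4 : ({a, b} : Finset V).card ≤ 2 :=
        (Finset.card_insert_le _ _).trans (by simp [Finset.card_singleton])
      simp [Finset.card_univ] at h2
      omega
    obtain ⟨c, hc⟩ := hc
    simp only [Finset.mem_insert, Finset.mem_singleton, not_or] at hc
    obtain ⟨hca, hcb⟩ := hc
    set θ : ℤˣ := f a b * f b c * f a c with hθ
    have key : ∀ i, i ≠ a → i ≠ b → f i b = θ * f i a * f a b := by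
      intro i hia hib
      by_cases hic : i = c
      · rw [hic, hθ, hsymm c b, hsymm c a]
        exact aux1 (f a b) (f b c) (f a c)
      · have h4 := h i a c b hia hic hib (Ne.symm hca) hab hcb
        have h5 := aux2 (f i a) (f a c) (f c b) (f b i) (f a b) h4
        rw [hsymm i b, h5, hθ, hsymm c b]
    set A : V → ℤˣ := fun i => if i = a then 1 else if i = b then θ * f a b else θ * f i a
      with hA
    have hAa : A a = 1 := by simp [hA]
    have hAb : A b = θ * f a b := by simp [hA, Ne.symm hab]
    have hAx : ∀ x, x ≠ a → x ≠ b → A x = θ * f x a := by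
      intro x h1 h2; simp [hA, h1, h2]
    refine ⟨θ, A, ?_⟩
    intro i j hij
    by_cases hia : i = a
    · by_cases hjb : j = b
      · rw [hia, hjb, hAa, hAb]; exact aux3 θ (f a b)
      · have hja : j ≠ a := by rw [hia] at hij; exact fun hh => hij hh.symm
        rw [hia, hAa, hAx j hja hjb, hsymm a j]
        exact aux3 θ (f j a)
    · by_cases hja : j = a
      · by_cases hib : i = b
        · rw [hib, hja, hAb, hAa, hsymm b a]; exact aux4 θ (f a b)
        · rw [hja, hAa, hAx i hia hib]; exact aux4 θ (f i a)
      · by_cases hib : i = b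
        · by_cases hjb : j = b
          · exact absurd (hib.trans hjb.symm) hij
          · rw [hib, hAb, hAx j hja hjb, hsymm b j]
            exact aux5 θ (f j a) (f a b) (f j b) (key j hja hjb)
        · by_cases hjb : j = b
          · rw [hjb, hAb, hAx i hia hib]
            exact aux6 θ (f i a) (f a b) (f i b) (key i hia hib)
          · rw [hAx i hia hib, hAx j hja hjb]
            have h4 := h i j a b hij hia hib hja hjb hab
            have h2 : f b i = θ * f i a * f a b := by rw [hsymm b i]; exact key i hia hib
            exact aux7 (f i j) (f j a) (f a b) (f b i) (f i a) θ h4 h2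
  · rintro ⟨θ, α, hf⟩ i j k l hij hik hil hjk hjl hkl
    rw [hf i j hij, hf j k hjk, hf k l hkl, hf l i (Ne.symm hil)]
    clear hf
    revert θ
    generalize α i = w; generalize α j = x; generalize α k = y; generalize α l = z
    revert w x y z; decide
end

section
/- Let V be a finite set with at least 3 elements, θ ∈ {1,-1}, α : V → {1,-1}, and define f(i,j) = θ·α(i)·α(j). Then for any distinct i₀,i₁,i₂ in V, the product f(i₀,i₁)·f(i₁,i₂)·f(i₂,i₀) equals θ. Consequently, a symmetric cocycle f (i.e., satisfying f(i,j)f(j,k)f(k,ℓ)f(ℓ,i)=1 for all distinct i,j,k,ℓ) is of the form f(i,j) = α(i)·α(j) for some α : V → {1,-1} if and only if f(i₀,i₁)·f(i₁,i₂)·f(i₂,i₀) = 1 for some (equivalently, every) triple of distinct vertices. -/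
theorem stmt_3 {V : Type*} [Fintype V] [DecidableEq V] (h3 : 3 ≤ Fintype.card V) :
    (∀ (θ : ℤˣ) (α : V → ℤˣ) (f : V → V → ℤˣ),
      (∀ i j, f i j = θ * α i * α j) →
      ∀ i₀ i₁ i₂ : V, i₀ ≠ i₁ → i₀ ≠ i₂ → i₁ ≠ i₂ →
        f i₀ i₁ * f i₁ i₂ * f i₂ i₀ = θ)
    ∧ (∀ f : V → V → ℤˣ, (∀ i j, f i j = f j i) →
      (∀ i j k l : V, i ≠ j → i ≠ k → i ≠ l → j ≠ k → j ≠ l → k ≠ l →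
        f i j * f j k * f k l * f l i = 1) →
      ∀ i₀ i₁ i₂ : V, i₀ ≠ i₁ → i₀ ≠ i₂ → i₁ ≠ i₂ →
        ((∃ α : V → ℤˣ, ∀ i j : V, i ≠ j → f i j = α i * α j) ↔
          f i₀ i₁ * f i₁ i₂ * f i₂ i₀ = 1)) := by
  constructor
  · intro θ α f hf i₀ i₁ i₂ _ _ _
    rw [hf, hf, hf]
    clear hf
    generalize α i₀ = a
    generalize α i₁ = b
    generalize α i₂ = c
    rcases Int.units_eq_one_or θ with rfl | rfl <;>
    rcases Int.units_eq_one_or a with rfl | rfl <;>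
    rcases Int.units_eq_one_or b with rfl | rfl <;>
    rcases Int.units_eq_one_or c with rfl | rfl <;>
      decide
  · intro f hsym hcoc i₀ i₁ i₂ h01 h02 h12
    constructor
    · rintro ⟨α, hα⟩
      rw [hα _ _ h01, hα _ _ h12, hα _ _ (Ne.symm h02)]
      generalize α i₀ = a
      generalize α i₁ = b
      generalize α i₂ = c
      rcases Int.units_eq_one_or a with rfl | rfl <;>
      rcases Int.units_eq_one_or b with rfl | rfl <;>
      rcases Int.units_eq_one_or c with rfl | rfl <;>
        decide
    · intro htri
      -- swap last two entries of a triangle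
      have swap : ∀ a b c : V, f a b * f b c * f c a = f a c * f c b * f b a := by
        intro a b c
        rw [hsym a b, hsym b c, hsym c a]
        rw [show f b a * f c b * f a c = f a c * f c b * f b a by
          rw [mul_comm, mul_comm (f b a) (f c b), ← mul_assoc]]
      -- replace third vertex of a triangle
      have L : ∀ a b c d : V, a ≠ b → a ≠ c → a ≠ d → b ≠ c → b ≠ d → c ≠ d →
          f a b * f b c * f c a = f a b * f b d * f d a := by
        intro a b c d hab hac had hbc hbd hcd
        have hc := hcoc c b d a hbc.symm hcd hac.symm hbd hab.symm had.symm
        rw [hsym c b, hsym a c] at hc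
        clear hsym hcoc htri swap
        generalize f a b = u at *
        generalize f b c = v at *
        generalize f c a = w at *
        generalize f b d = p at *
        generalize f d a = q at *
        revert hc
        rcases Int.units_eq_one_or u with rfl | rfl <;>
        rcases Int.units_eq_one_or v with rfl | rfl <;>
        rcases Int.units_eq_one_or w with rfl | rfl <;>
        rcases Int.units_eq_one_or p with rfl | rfl <;>
        rcases Int.units_eq_one_or q with rfl | rfl <;>
          decide
      -- all triangles through i₀ and i₁ are 1
      have key1 : ∀ y : V, y ≠ i₀ → y ≠ i₁ → f i₀ i₁ * f i₁ y * f y i₀ = 1 := by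
        intro y hy0 hy1
        by_cases hy2 : y = i₂
        · subst hy2; exact htri
        · rw [L i₀ i₁ y i₂ h01 hy0.symm h02 hy1.symm h12 hy2]
          exact htri
      -- all triangles through i₀ are 1
      have key : ∀ x y : V, x ≠ i₀ → y ≠ i₀ → x ≠ y → f i₀ x * f x y * f y i₀ = 1 := by
        intro x y hx0 hy0 hxy
        by_cases hx1 : x = i₁
        · subst hx1; exact key1 y hy0 (Ne.symm hxy)
        · by_cases hy1 : y = i₁
          · subst hy1
            rw [swap]
            exact key1 x hx0 hx1
          · rw [L i₀ x y i₁ hx0.symm hy0.symm h01 hxy hx1 hy1, swap]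
            exact key1 x hx0 hx1
      refine ⟨fun i => if i = i₀ then 1 else f i₀ i, ?_⟩
      intro i j hij
      by_cases hi : i = i₀ <;> by_cases hj : j = i₀
      · exact absurd (hi.trans hj.symm) hij
      · subst hi; simp [hj]
      · subst hj; simp [hi, hsym i j]
      · simp only [if_neg hi, if_neg hj]
        have hk := key i j hi hj hij
        rw [hsym j i₀] at hk
        clear hsym hcoc htri swap L key key1
        generalize f i₀ i = u at *
        generalize f i j = v at *
        generalize f i₀ j = w at *
        revert hk
        rcases Int.units_eq_one_or u with rfl | rfl <;>
        rcases Int.units_eq_one_or v with rfl | rfl <;>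
        rcases Int.units_eq_one_or w with rfl | rfl <;>
          decide
end

section
/- Let V be a finite set and f : V × V → {1,-1} any function (not necessarily symmetric) such that the 'norm' Nf defined by (Nf)(i,j) = f(i,j)·f(j,i) satisfies the square condition ((Nf)(i,j)(Nf)(j,k)(Nf)(k,ℓ)(Nf)(ℓ,i) = 1 for distinct i,j,k,ℓ). Define g on 4-tuples of distinct vertices by g(i,i',i'',i''') = f(i,i')·f(i'',i')·f(i'',i''')·f(i,i'''). Then for any cube, i.e., any 8 distinct vertices arranged as two disjoint squares [i,j,k,ℓ] and [i',j',k',ℓ'], the product g(i,j,j',i')·g(j,k,k',j')·g(i',j',k',ℓ')·g(k,k',ℓ',ℓ)·g(i,i',ℓ',ℓ)·g(i,j,k,ℓ) equals 1. -/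
theorem stmt_5 {V : Type*} [Fintype V] [DecidableEq V] (h8 : 8 ≤ Fintype.card V)
    (f : V → V → ℤˣ)
    (hNf : ∀ i j k l : V, i ≠ j → i ≠ k → i ≠ l → j ≠ k → j ≠ l → k ≠ l →
      (f i j * f j i) * (f j k * f k j) * (f k l * f l k) * (f l i * f i l) = 1)
    (g : V → V → V → V → ℤˣ)
    (hg : ∀ i i' i'' i''' : V, g i i' i'' i''' = f i i' * f i'' i' * f i'' i''' * f i i''') :
    ∀ i j k l i' j' k' l' : V,
      ([i, j, k, l, i', j', k', l'] : List V).Pairwise (· ≠ ·) →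
      g i j j' i' * g j k k' j' * g i' j' k' l' * g k k' l' l * g i i' l' l * g i j k l
        = 1 := by
  intro i j k l i' j' k' l' hp
  simp only [List.pairwise_cons, List.mem_cons, List.mem_singleton, List.not_mem_nil] at hp
  obtain ⟨hi, hj, hk, hl, hi', hj', hk', -⟩ := hp
  have sq : ∀ u : ℤˣ, u * u = 1 := fun u => by
    rcases Int.units_eq_one_or u with h | h <;> simp [h]
  have hA := hNf j k k' j' (hj _ (by simp)) (hj _ (by simp)) (hj _ (by simp))
    (hk _ (by simp)) (hk _ (by simp)) ((hj' _ (by simp)).symm)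
  have hB := hNf i' j' k' l' (hi' _ (by simp)) (hi' _ (by simp)) (hi' _ (by simp))
    (hj' _ (by simp)) (hj' _ (by simp)) (hk' _ (by simp))
  have key : (g i j j' i' * g j k k' j' * g i' j' k' l' * g k k' l' l * g i i' l' l
        * g i j k l) * (f j' k' * f j' k')
      = ((f j k * f k j) * (f k k' * f k' k) * (f k' j' * f j' k') * (f j' j * f j j'))
        * ((f i' j' * f j' i') * (f j' k' * f k' j') * (f k' l' * f l' k')
            * (f l' i' * f i' l'))
        * ((f i j * f i j) * (f i i' * f i i') * (f l' l * f l' l) * (f k l * f k l)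
            * (f i l * f i l)) := by
    simp only [hg]
    rw [Units.ext_iff]
    push_cast
    ring
  have := key
  rw [hA, hB, sq, sq, sq, sq, sq, sq] at this
  simpa using this
end

section
/- Let V be a finite set with at least 4 elements and f : V × V → {1,-1} a function such that f(i,j)·f(k,j)·f(k,ℓ)·f(i,ℓ) = 1 for all distinct i,j,k,ℓ (i.e., the directed differential δ⃗¹f is identically 1). Then the function Nf defined by (Nf)(i,j) = f(i,j)·f(j,i) is of the form (Nf)(i,j) = α(i)·α(j) for some α : V → {1,-1}. -/
private lemma aux_L1 : ∀ A A' B B' C C' G : ℤˣ,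
    A * C' * G * B = 1 → A' * B' * G * C = 1 →
    A * A' = (B * B') * (C * C') := by decide

private lemma aux_K1 : ∀ P Q S T R : ℤˣ,
    P * S * T * R = 1 → P * Q = (S * T) * (R * Q) := by decide

private lemma aux_K1' : ∀ P Q R : ℤˣ, P * Q = (P * R) * (R * Q) := by decide

private lemma aux_K3 : ∀ W U Q X Y : ℤˣ,
    W * Q * X * Y = 1 → W * U = (Y * X) * (U * Q) := by decide

private lemma aux_K2 : ∀ Y U X : ℤˣ, Y * U = (Y * X) * (U * X) := by decide

private lemma aux_L4 : ∀ A B S T Y X P Q R : ℤˣ,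
    A * Q * R * X = 1 → Y * R * P * B = 1 → S * P * Q * T = 1 →
    A * B = (S * T) * (Y * X) := by decide

theorem stmt_6 {V : Type*} [Fintype V] [DecidableEq V] (h4 : 4 ≤ Fintype.card V)
    (f : V → V → ℤˣ)
    (hdel : ∀ i j k l : V, i ≠ j → i ≠ k → i ≠ l → j ≠ k → j ≠ l → k ≠ l →
      f i j * f k j * f k l * f i l = 1) :
    ∃ α : V → ℤˣ, ∀ i j : V, i ≠ j → f i j * f j i = α i * α j := by
  rw [← Fintype.card_fin 4] at h4
  obtain ⟨e⟩ := Function.Embedding.nonempty_of_card_le h4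
  set a : V := e 0 with ha
  set b : V := e 1 with hb
  set c : V := e 2 with hc
  set d : V := e 3 with hd
  have hab : a ≠ b := fun h => by simpa using e.injective h
  have hac : a ≠ c := fun h => by simpa using e.injective h
  have had : a ≠ d := fun h => by simpa using e.injective h
  have hbc : b ≠ c := fun h => by simpa using e.injective h
  have hbd : b ≠ d := fun h => by simpa using e.injective h
  have hcd : c ≠ d := fun h => by simpa using e.injective h
  refine ⟨fun i => if i = a then f c a * f c b else if i = b then f b c * f a c
      else f i b * f a i, ?_⟩
  have keyA : ∀ j : V, j ≠ a → j ≠ b →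
      f a j * f j a = (f c a * f c b) * (f j b * f a j) := by
    intro j hja hjb
    rw [mul_comm (f a j) (f j a)]
    by_cases hjc : j = c
    · subst hjc
      exact aux_K1' (f c a) (f a c) (f c b)
    · have h := hdel j a c b hja hjc hjb hac hab (hbc.symm)
      exact aux_K1 (f j a) (f a j) (f c a) (f c b) (f j b) h
  have keyB : ∀ j : V, j ≠ a → j ≠ b →
      f b j * f j b = (f b c * f a c) * (f j b * f a j) := by
    intro j hja hjb
    by_cases hjc : j = c
    · subst hjc
      exact aux_K2 (f b c) (f c b) (f a c)
    · have h := hdel b j a c (hjb.symm) (hab.symm) hbc hja hjc hac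
      exact aux_K3 (f b j) (f j b) (f a j) (f a c) (f b c) h
  have keyAB : f a b * f b a = (f c a * f c b) * (f b c * f a c) := by
    have hA := hdel a b d c hab had hac hbd hbc (hcd.symm)
    have hB := hdel b c d a hbc hbd (hab.symm) hcd (hac.symm) (had.symm)
    have hC := hdel c a d b (hac.symm) hcd (hbc.symm) had hab (hbd.symm)
    exact aux_L4 (f a b) (f b a) (f c a) (f c b) (f b c) (f a c)
      (f d a) (f d b) (f d c) hA hB hC
  intro i j hij
  by_cases hia : i = a
  · subst hia
    by_cases hjb : j = b
    · subst hjb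
      simp [hab.symm]
      exact keyAB
    · have hja : j ≠ a := hij.symm
      simp [hja, hjb]
      exact keyA j hja hjb
  · by_cases hib : i = b
    · subst hib
      by_cases hja : j = a
      · subst hja
        simp [hab.symm]
        rw [mul_comm (f b a) (f a b), mul_comm (f b c * f a c)]
        exact keyAB
      · have hjb : j ≠ b := hij.symm
        simp [hia, hja, hjb]
        exact keyB j hja hjb
    · by_cases hja : j = a
      · subst hja
        simp [hia, hib]
        rw [mul_comm (f i a) (f a i), mul_comm (f i b * f a i)]
        exact keyA i hia hib
      · by_cases hjb : j = b
        · subst hjb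
          simp [hia, hib, hab.symm]
          rw [mul_comm (f i b) (f b i), mul_comm (f i b * f a i)]
          exact keyB i hia hib
        · simp only [if_neg hia, if_neg hib, if_neg hja, if_neg hjb]
          have h1 := hdel i j a b hij hia hib hja hjb hab
          have h2 := hdel j i a b (hij.symm) hja hjb hia hib hab
          exact aux_L1 (f i j) (f j i) (f i b) (f a i) (f j b) (f a j) (f a b) h1 h2
end

section
/- Let V be a finite set with at least 10 elements, and let g be a {1,-1}-valued function on squares over V (i.e., a function on 4-tuples of distinct vertices invariant under the dihedral group D₄ acting on the indices). Suppose that for every cube (8 distinct vertices arranged as two disjoint squares [i,j,k,ℓ], [i',j',k',ℓ']), the product of g over the six faces equals a product α(i)α(j)α(k)α(ℓ)α(i')α(j')α(k')α(ℓ') for a fixed function α : V → {1,-1}. Then for all distinct a,b,i,i',j,j' in V: g(a,i,b,j)·g(a,j,b,j')·g(a,j',b,i')·g(a,i',b,i) = 1. -/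
/-- Pairwise distinctness of the four vertices of a square. -/
def SqDistinct {V : Type*} (i j k l : V) : Prop :=
  i ≠ j ∧ i ≠ k ∧ i ≠ l ∧ j ≠ k ∧ j ≠ l ∧ k ≠ l

/-- A function on squares: invariant under the dihedral group `D₄` acting on
distinct 4-tuples. -/
def IsSquareFn {V : Type*} (g : V → V → V → V → ℤˣ) : Prop :=
  ∀ i j k l : V, SqDistinct i j k l →
    g i j k l = g j k l i ∧ g i j k l = g l k j i

private lemma cancel_aux (u x : ℤˣ) : u * (u * x) = x := by
  rw [← mul_assoc, Int.units_mul_self, one_mul]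

/-- reflection across the `p`-`r` diagonal -/
private lemma gswap {V : Type*} (g : V → V → V → V → ℤˣ) (hsq : IsSquareFn g)
    (p q r s : V) (h : SqDistinct p q r s) : g p q r s = g p s r q := by
  obtain ⟨h1, h2, h3, h4, h5, h6⟩ := h
  have e1 := (hsq p q r s ⟨h1, h2, h3, h4, h5, h6⟩).2
  have e2 := (hsq s r q p ⟨h6.symm, h5.symm, h3.symm, h4.symm, h2.symm, h1.symm⟩).1
  have e3 := (hsq r q p s ⟨h4.symm, h2.symm, h6, h1.symm, h5, h3⟩).1
  have e4 := (hsq q p s r ⟨h1.symm, h5, h4, h3, h2, h6.symm⟩).1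
  exact e1.trans (e2.trans (e3.trans e4))

theorem stmt_8 {V : Type*} [Fintype V] [DecidableEq V] (h10 : 10 ≤ Fintype.card V)
    (g : V → V → V → V → ℤˣ) (hsq : IsSquareFn g) (α : V → ℤˣ)
    (hcube : ∀ i j k l i' j' k' l' : V,
      ([i, j, k, l, i', j', k', l'] : List V).Pairwise (· ≠ ·) →
      g i j j' i' * g j k k' j' * g i' j' k' l' * g k k' l' l * g i i' l' l * g i j k l
        = α i * α j * α k * α l * α i' * α j' * α k' * α l') :
    ∀ a b i i' j j' : V, ([a, b, i, i', j, j'] : List V).Pairwise (· ≠ ·) →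
      g a i b j * g a j b j' * g a j' b i' * g a i' b i = 1 := by
  intro a b i i' j j' hdist
  simp only [List.pairwise_cons, List.mem_cons, List.not_mem_nil, or_false,
    forall_eq_or_imp, forall_eq, and_true, false_implies, implies_true, true_and,
    List.Pairwise.nil] at hdist
  obtain ⟨⟨hab, hai, hai', haj, haj'⟩, ⟨hbi, hbi', hbj, hbj'⟩, ⟨hii', hij, hij'⟩,
    ⟨hi'j, hi'j'⟩, hjj'⟩ := hdist
  -- pick four fresh vertices c, d, e, f
  have fresh : ∀ t : Finset V, t.card < 10 → ∃ x, x ∉ t := by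
    intro t ht
    by_contra hx
    push_neg at hx
    have he : t = Finset.univ := Finset.eq_univ_iff_forall.mpr hx
    rw [he, Finset.card_univ] at ht
    omega
  have cardle : ∀ (x : V) (s : Finset V) (n : ℕ), s.card ≤ n → (insert x s).card ≤ n + 1 :=
    fun x s n h => (Finset.card_insert_le x s).trans (Nat.add_le_add_right h 1)
  have k1 : ({j'} : Finset V).card ≤ 1 := by simp
  have k2 : ({j, j'} : Finset V).card ≤ 2 := cardle _ _ _ k1
  have k3 : ({i', j, j'} : Finset V).card ≤ 3 := cardle _ _ _ k2
  have k4 : ({i, i', j, j'} : Finset V).card ≤ 4 := cardle _ _ _ k3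
  have k5 : ({b, i, i', j, j'} : Finset V).card ≤ 5 := cardle _ _ _ k4
  have k6 : ({a, b, i, i', j, j'} : Finset V).card ≤ 6 := cardle _ _ _ k5
  obtain ⟨c, hc⟩ := fresh {a, b, i, i', j, j'} (by omega)
  have k7 : ({c, a, b, i, i', j, j'} : Finset V).card ≤ 7 := cardle _ _ _ k6
  obtain ⟨d, hd⟩ := fresh {c, a, b, i, i', j, j'} (by omega)
  have k8 : ({d, c, a, b, i, i', j, j'} : Finset V).card ≤ 8 := cardle _ _ _ k7
  obtain ⟨e, he⟩ := fresh {d, c, a, b, i, i', j, j'} (by omega)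
  have k9 : ({e, d, c, a, b, i, i', j, j'} : Finset V).card ≤ 9 := cardle _ _ _ k8
  obtain ⟨f, hf⟩ := fresh {e, d, c, a, b, i, i', j, j'} (by omega)
  simp only [Finset.mem_insert, Finset.mem_singleton] at hc hd he hf
  push_neg at hc hd he hf
  obtain ⟨hca, hcb, hci, hci', hcj, hcj'⟩ := hc
  obtain ⟨hdc, hda, hdb, hdi, hdi', hdj, hdj'⟩ := hd
  obtain ⟨hed, hec, hea, heb, hei, hei', hej, hej'⟩ := he
  obtain ⟨hfe, hfd, hfc, hfa, hfb, hfi, hfi', hfj, hfj'⟩ := hf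
  -- the four cube identities
  have E1 := hcube a i b j c e d f (by
    simp only [List.pairwise_cons, List.mem_cons, List.not_mem_nil, or_false,
      forall_eq_or_imp, forall_eq, and_true, false_implies, implies_true, true_and, ne_eq,
      List.Pairwise.nil]
    exact ⟨⟨hai, hab, haj, hca.symm, hea.symm, hda.symm, hfa.symm⟩,
      ⟨hbi.symm, hij, hci.symm, hei.symm, hdi.symm, hfi.symm⟩,
      ⟨hbj, hcb.symm, heb.symm, hdb.symm, hfb.symm⟩,
      ⟨hcj.symm, hej.symm, hdj.symm, hfj.symm⟩,
      ⟨hec.symm, hdc.symm, hfc.symm⟩, ⟨hed, hfe.symm⟩, hfd.symm⟩)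
  have E2 := hcube a j' b j c e d f (by
    simp only [List.pairwise_cons, List.mem_cons, List.not_mem_nil, or_false,
      forall_eq_or_imp, forall_eq, and_true, false_implies, implies_true, true_and, ne_eq,
      List.Pairwise.nil]
    exact ⟨⟨haj', hab, haj, hca.symm, hea.symm, hda.symm, hfa.symm⟩,
      ⟨hbj'.symm, hjj'.symm, hcj'.symm, hej'.symm, hdj'.symm, hfj'.symm⟩,
      ⟨hbj, hcb.symm, heb.symm, hdb.symm, hfb.symm⟩,
      ⟨hcj.symm, hej.symm, hdj.symm, hfj.symm⟩,
      ⟨hec.symm, hdc.symm, hfc.symm⟩, ⟨hed, hfe.symm⟩, hfd.symm⟩)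
  have E3 := hcube a j' b i' c e d f (by
    simp only [List.pairwise_cons, List.mem_cons, List.not_mem_nil, or_false,
      forall_eq_or_imp, forall_eq, and_true, false_implies, implies_true, true_and, ne_eq,
      List.Pairwise.nil]
    exact ⟨⟨haj', hab, hai', hca.symm, hea.symm, hda.symm, hfa.symm⟩,
      ⟨hbj'.symm, hi'j'.symm, hcj'.symm, hej'.symm, hdj'.symm, hfj'.symm⟩,
      ⟨hbi', hcb.symm, heb.symm, hdb.symm, hfb.symm⟩,
      ⟨hci'.symm, hei'.symm, hdi'.symm, hfi'.symm⟩,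
      ⟨hec.symm, hdc.symm, hfc.symm⟩, ⟨hed, hfe.symm⟩, hfd.symm⟩)
  have E4 := hcube a i b i' c e d f (by
    simp only [List.pairwise_cons, List.mem_cons, List.not_mem_nil, or_false,
      forall_eq_or_imp, forall_eq, and_true, false_implies, implies_true, true_and, ne_eq,
      List.Pairwise.nil]
    exact ⟨⟨hai, hab, hai', hca.symm, hea.symm, hda.symm, hfa.symm⟩,
      ⟨hbi.symm, hii', hci.symm, hei.symm, hdi.symm, hfi.symm⟩,
      ⟨hbi', hcb.symm, heb.symm, hdb.symm, hfb.symm⟩,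
      ⟨hci'.symm, hei'.symm, hdi'.symm, hfi'.symm⟩,
      ⟨hec.symm, hdc.symm, hfc.symm⟩, ⟨hed, hfe.symm⟩, hfd.symm⟩)
  -- dihedral swaps on the top faces of cubes 2 and 4
  have hswap2 : g a j' b j = g a j b j' :=
    gswap g hsq a j' b j ⟨haj', hab, haj, hbj'.symm, hjj'.symm, hbj⟩
  have hswap4 : g a i b i' = g a i' b i :=
    gswap g hsq a i b i' ⟨hai, hab, hai', hbi.symm, hii', hbi'⟩
  rw [hswap2] at E2
  rw [hswap4] at E4
  have key : (g a i e c * g i b d e * g c e d f * g b d f j * g a c f j * g a i b j) *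
      (g a j' e c * g j' b d e * g c e d f * g b d f j * g a c f j * g a j b j') *
      (g a j' e c * g j' b d e * g c e d f * g b d f i' * g a c f i' * g a j' b i') *
      (g a i e c * g i b d e * g c e d f * g b d f i' * g a c f i' * g a i' b i)
      = (α a * α i * α b * α j * α c * α e * α d * α f) *
        (α a * α j' * α b * α j * α c * α e * α d * α f) *
        (α a * α j' * α b * α i' * α c * α e * α d * α f) *
        (α a * α i * α b * α i' * α c * α e * α d * α f) := by
    rw [E1, E2, E3, E4]
  calc g a i b j * g a j b j' * g a j' b i' * g a i' b i
      = (g a i e c * g i b d e * g c e d f * g b d f j * g a c f j * g a i b j) *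
        (g a j' e c * g j' b d e * g c e d f * g b d f j * g a c f j * g a j b j') *
        (g a j' e c * g j' b d e * g c e d f * g b d f i' * g a c f i' * g a j' b i') *
        (g a i e c * g i b d e * g c e d f * g b d f i' * g a c f i' * g a i' b i) := by
        simp [mul_comm, mul_left_comm, mul_assoc, Int.units_mul_self, cancel_aux]
    _ = (α a * α i * α b * α j * α c * α e * α d * α f) *
        (α a * α j' * α b * α j * α c * α e * α d * α f) *
        (α a * α j' * α b * α i' * α c * α e * α d * α f) *
        (α a * α i * α b * α i' * α c * α e * α d * α f) := key
    _ = 1 := by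
        simp [mul_comm, mul_left_comm, mul_assoc, Int.units_mul_self, cancel_aux]
end

section
/- Let V be a finite set with at least 6 elements and f : V × V → {1,-1} symmetric. Suppose the fraction of 4-tuples (i,j,k,ℓ) of distinct vertices with f(i,j)·f(j,k)·f(k,ℓ)·f(ℓ,i) ≠ 1 is at most p. Then there exist θ ∈ {1,-1} and α : V → {1,-1} such that the fraction of ordered pairs (i,j) of distinct vertices with f(i,j) ≠ θ·α(i)·α(j) is at most 3p. -/
/-- Pairwise distinctness of the four vertices of a square. -/
def SqDistinct4 {V : Type*} (t : V × V × V × V) : Prop :=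
  t.1 ≠ t.2.1 ∧ t.1 ≠ t.2.2.1 ∧ t.1 ≠ t.2.2.2 ∧ t.2.1 ≠ t.2.2.1 ∧
    t.2.1 ≠ t.2.2.2 ∧ t.2.2.1 ≠ t.2.2.2

instance {V : Type*} [DecidableEq V] : DecidablePred (SqDistinct4 (V := V)) := fun _ =>
  by unfold SqDistinct4; infer_instance

/-!
Switching `f` by `α x = f r x` (with `α r = θ`) leaves wrong exactly the pairs `xy` avoiding `r`
with `f r x * f x y * f y r ≠ θ`, so everything is governed by triangle signs.
A square `ijkl` is violated iff the triangles `ikj` and `ikl` on its diagonal `ik` have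
different signs; hence the minority count `d(i,k)` of triangle signs on the edge `ik` gives at least
`(n - 2) d(i,k)` violated squares with that diagonal, and `(n - 2) ∑ d ≤ #violated`.
At a vertex `r`, a triangle `rxy` with the wrong sign is either a minority triangle of `rx`
or sits on an edge `rx` whose majority sign is not `θ`. Taking `θ` to be the majority of these
majorities, the second kind is controlled by `∑ₓ d(r,x)` as well: two edges `rx`, `ry` with
different majorities make `rxy` a minority triangle of one of them. This gives
`n · #wrong ≤ 3 ∑ d` for a suitable `r`, by averaging.
-/

open Finset

namespace SquareTest

section Counting

variable {α β : Type*}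

lemma card_filter_product_eq_sum (s : Finset α) (t : Finset β) (P : α × β → Prop)
    [DecidablePred P] : #{q ∈ s ×ˢ t | P q} = ∑ x ∈ s, #{y ∈ t | P (x, y)} := by
  simp only [card_filter, sum_product]

lemma card_filter_offDiag_eq_sum [DecidableEq α] (s : Finset α) (P : α × α → Prop)
    [DecidablePred P] : #{q ∈ s.offDiag | P q} = ∑ x ∈ s, #{y ∈ s.erase x | P (x, y)} := by
  have : s.offDiag = {q ∈ s ×ˢ s | q.1 ≠ q.2} := by ext; simp [and_assoc]
  rw [this, filter_filter, card_filter_product_eq_sum]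
  refine sum_congr rfl fun x _ => ?_
  rw [filter_erase]
  congr 1
  ext y
  simp only [mem_filter, mem_erase]
  tauto

def majority (s : Finset α) (m : α → ℤˣ) : ℤˣ :=
  if #{x ∈ s | m x ≠ 1} ≤ #{x ∈ s | m x ≠ -1} then 1 else -1

def minority (s : Finset α) (m : α → ℤˣ) : ℕ := #{x ∈ s | m x ≠ majority s m}

lemma minority_le (s : Finset α) (m : α → ℤˣ) (θ : ℤˣ) : minority s m ≤ #{x ∈ s | m x ≠ θ} := by
  unfold minority majority
  rcases Int.units_eq_one_or θ with rfl | rfl <;> split_ifs <;> omega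

lemma card_mul_minority_le (s : Finset α) (m : α → ℤˣ) :
    #s * minority s m ≤ #{q ∈ s ×ˢ s | m q.1 ≠ m q.2} := by
  rw [card_filter_product_eq_sum, ← smul_eq_mul, ← sum_const]
  refine sum_le_sum fun x _ => (minority_le s m (m x)).trans_eq ?_
  simp_rw [ne_comm]

lemma card_filter_ne_le_two_mul [DecidableEq α] [DecidableEq β] (s : Finset α) (m : α → β)
    (t : α → α → β) (ht : ∀ x y, t x y = t y x) :
    #{q ∈ s ×ˢ s | m q.1 ≠ m q.2} ≤ 2 * #{q ∈ s.offDiag | t q.1 q.2 ≠ m q.1} := by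
  set A := {q ∈ s.offDiag | t q.1 q.2 ≠ m q.1}
  have hsub : {q ∈ s ×ˢ s | m q.1 ≠ m q.2} ⊆ A ∪ A.image Prod.swap := by
    rintro ⟨x, y⟩ hxy
    simp only [mem_filter, mem_product] at hxy
    obtain ⟨⟨hx, hy⟩, hm⟩ := hxy
    have hne : x ≠ y := fun h => hm (h ▸ rfl)
    by_cases htx : t x y = m x
    · refine mem_union_right _ (mem_image.2 ⟨(y, x), ?_, rfl⟩)
      simp only [A, mem_filter, mem_offDiag]
      exact ⟨⟨hy, hx, hne.symm⟩, ht y x ▸ htx ▸ hm⟩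
    · exact mem_union_left _ (mem_filter.2 ⟨mem_offDiag.2 ⟨hx, hy, hne⟩, htx⟩)
  calc #{q ∈ s ×ˢ s | m q.1 ≠ m q.2} ≤ #(A ∪ A.image Prod.swap) := card_le_card hsub
    _ ≤ #A + #(A.image Prod.swap) := card_union_le _ _
    _ ≤ 2 * #A := by linarith [card_image_le (s := A) (f := Prod.swap)]

end Counting

section Signs

variable {V : Type*}

def tri (f : V → V → ℤˣ) (a b c : V) : ℤˣ := f a b * f b c * f c a

lemma tri_swap {f : V → V → ℤˣ} (hsymm : ∀ i j, f i j = f j i) (a b c : V) :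
    tri f a b c = tri f a c b := by
  simp only [tri, hsymm b a, hsymm c b, hsymm a c]
  ac_rfl

lemma tri_mul_tri {f : V → V → ℤˣ} (hsymm : ∀ i j, f i j = f j i) (i j k l : V) :
    tri f i k j * tri f i k l = f i j * f j k * f k l * f l i := by
  calc tri f i k j * tri f i k l = f i k * f i k * (f j i * f k j * f k l * f l i) := by
        simp only [tri]; ac_rfl
    _ = f i j * f j k * f k l * f l i := by
        rw [Int.units_mul_self, one_mul, hsymm j i, hsymm k j]

variable [Fintype V]

lemma card_filter_eq_sum_sum (Q : V × V × V × V → Prop) [DecidablePred Q] :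
    #{t | Q t} = ∑ i, ∑ k, #{q : V × V | Q (i, q.1, k, q.2)} := by
  simp only [card_filter, Fintype.sum_prod_type]
  exact sum_congr rfl fun i _ => sum_comm

variable [DecidableEq V]

def edgeMajority (f : V → V → ℤˣ) (i k : V) : ℤˣ := majority {i, k}ᶜ (tri f i k)

def edgeDefect (f : V → V → ℤˣ) (i k : V) : ℕ := minority {i, k}ᶜ (tri f i k)

def vertexDefect (f : V → V → ℤˣ) (r : V) : ℕ := ∑ x ∈ {r}ᶜ, edgeDefect f r x

def starSwitch (f : V → V → ℤˣ) (r : V) (θ : ℤˣ) (x : V) : ℤˣ := if x = r then θ else f r x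

lemma card_compl_pair {i k : V} (h : i ≠ k) : #({i, k}ᶜ : Finset V) = Fintype.card V - 2 := by
  rw [card_compl, card_pair h]

lemma compl_singleton_erase (r x : V) : ({r}ᶜ : Finset V).erase x = {r, x}ᶜ := by
  ext; simp [and_comm]

lemma sqDistinct4_iff {i j k l : V} :
    SqDistinct4 (i, j, k, l) ↔ i ≠ k ∧ (j, l) ∈ ({i, k}ᶜ : Finset V).offDiag := by
  simp only [SqDistinct4, mem_offDiag, mem_compl, mem_insert, mem_singleton]
  tauto

lemma card_sqDistinct4 :
    #{t : V × V × V × V | SqDistinct4 t}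
      = Fintype.card V * (Fintype.card V - 1) * ((Fintype.card V - 2) * (Fintype.card V - 3)) := by
  have hfiber (i k : V) : #{q : V × V | SqDistinct4 (i, q.1, k, q.2)}
      = if i = k then 0 else (Fintype.card V - 2) * (Fintype.card V - 3) := by
    split_ifs with hik
    · simp [sqDistinct4_iff, hik]
    · calc #{q : V × V | SqDistinct4 (i, q.1, k, q.2)} = #({i, k}ᶜ : Finset V).offDiag := by
            congr 1; ext; simp [sqDistinct4_iff, hik]
        _ = _ := by rw [offDiag_card, card_compl_pair hik, ← Nat.mul_sub_one, Nat.sub_sub]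
  simp [card_filter_eq_sum_sum, hfiber, sum_ite, filter_ne, mul_assoc]

lemma card_filter_fst_ne_snd :
    #{t : V × V | t.1 ≠ t.2} = Fintype.card V * (Fintype.card V - 1) := by
  rw [← card_univ, Nat.mul_sub_one, ← offDiag_card]
  congr 1
  ext
  simp

variable {f : V → V → ℤˣ}

lemma vertexDefect_eq (r : V) : vertexDefect f r
    = #{q ∈ ({r}ᶜ : Finset V).offDiag | tri f r q.1 q.2 ≠ edgeMajority f r q.1} := by
  rw [card_filter_offDiag_eq_sum]
  simp_rw [compl_singleton_erase]
  rfl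

lemma card_filter_tri_ne_le (r : V) (θ : ℤˣ) :
    #{q ∈ ({r}ᶜ : Finset V).offDiag | tri f r q.1 q.2 ≠ θ}
      ≤ vertexDefect f r
        + (Fintype.card V - 2) * #{x ∈ ({r}ᶜ : Finset V) | edgeMajority f r x ≠ θ} := by
  rw [card_filter_offDiag_eq_sum, vertexDefect, card_filter, mul_sum, ← sum_add_distrib]
  refine sum_le_sum fun x hx => ?_
  rw [compl_singleton_erase]
  split_ifs with hθ
  · have hrx : r ≠ x := by simpa [eq_comm] using hx
    calc _ ≤ #({r, x}ᶜ : Finset V) := card_filter_le _ _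
      _ ≤ _ := by rw [card_compl_pair hrx]; omega
  · rw [not_not] at hθ
    simp [edgeDefect, minority, ← hθ, edgeMajority]

lemma sub_two_mul_minority_le (hsymm : ∀ i j, f i j = f j i) (r : V) :
    (Fintype.card V - 2) * minority {r}ᶜ (edgeMajority f r) ≤ 2 * vertexDefect f r := by
  have hcard : #({r}ᶜ : Finset V) = Fintype.card V - 1 := by rw [card_compl, card_singleton]
  calc (Fintype.card V - 2) * minority {r}ᶜ (edgeMajority f r)
      ≤ #({r}ᶜ : Finset V) * minority {r}ᶜ (edgeMajority f r) := by
        rw [hcard]; exact Nat.mul_le_mul_right _ (by omega)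
    _ ≤ #{q ∈ ({r}ᶜ : Finset V) ×ˢ {r}ᶜ | edgeMajority f r q.1 ≠ edgeMajority f r q.2} :=
        card_mul_minority_le _ _
    _ ≤ 2 * vertexDefect f r := by
        rw [vertexDefect_eq]
        exact card_filter_ne_le_two_mul _ _ _ (tri_swap hsymm r)

lemma exists_card_mul_filter_tri_ne_le [Nonempty V] (hsymm : ∀ i j, f i j = f j i) :
    ∃ r θ, Fintype.card V * #{q ∈ ({r}ᶜ : Finset V).offDiag | tri f r q.1 q.2 ≠ θ}
      ≤ 3 * ∑ r, vertexDefect f r := by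
  have hcost (r : V) : #{q ∈ ({r}ᶜ : Finset V).offDiag |
      tri f r q.1 q.2 ≠ majority {r}ᶜ (edgeMajority f r)} ≤ 3 * vertexDefect f r :=
    (card_filter_tri_ne_le r _).trans <| by
      have := sub_two_mul_minority_le hsymm r
      unfold minority at this
      omega
  obtain ⟨r, -, hr⟩ := exists_le_of_sum_le (s := univ) univ_nonempty
    (f := fun r => Fintype.card V * #{q ∈ ({r}ᶜ : Finset V).offDiag |
      tri f r q.1 q.2 ≠ majority {r}ᶜ (edgeMajority f r)})
    (g := fun _ => 3 * ∑ r, vertexDefect f r) (by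
      rw [← mul_sum, sum_const, card_univ, smul_eq_mul]
      exact Nat.mul_le_mul_left _ ((sum_le_sum fun r _ => hcost r).trans_eq (mul_sum ..).symm))
  exact ⟨r, _, hr⟩

lemma filter_ne_starSwitch_subset (hsymm : ∀ i j, f i j = f j i) (r : V) (θ : ℤˣ) :
    ({t : V × V | t.1 ≠ t.2 ∧ f t.1 t.2 ≠ θ * starSwitch f r θ t.1 * starSwitch f r θ t.2} :
      Finset (V × V)) ⊆ {q ∈ ({r}ᶜ : Finset V).offDiag | tri f r q.1 q.2 ≠ θ} := by
  have hunits : ∀ a c d e : ℤˣ, c * a * d = e → a = e * c * d := by decide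
  rintro ⟨x, y⟩ hxy
  simp only [mem_filter, mem_univ, true_and, mem_offDiag, mem_compl, mem_singleton] at hxy ⊢
  obtain ⟨hne, hbad⟩ := hxy
  by_cases hx : x = r
  · subst hx
    simp [starSwitch, Ne.symm hne] at hbad
  by_cases hy : y = r
  · subst hy
    simp [starSwitch, hx, hsymm x y, mul_right_comm θ] at hbad
  simp only [starSwitch, hx, hy, if_false] at hbad
  refine ⟨⟨hx, hy, hne⟩, fun h => hbad (hunits _ _ _ _ ?_)⟩
  rw [← h, tri, hsymm y r]

lemma sub_two_mul_sum_vertexDefect_le (hsymm : ∀ i j, f i j = f j i) :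
    (Fintype.card V - 2) * ∑ r, vertexDefect f r
      ≤ #{t : V × V × V × V | SqDistinct4 t ∧
          f t.1 t.2.1 * f t.2.1 t.2.2.1 * f t.2.2.1 t.2.2.2 * f t.2.2.2 t.1 ≠ 1} := by
  rw [card_filter_eq_sum_sum, mul_sum]
  refine sum_le_sum fun i _ => ?_
  rw [vertexDefect, mul_sum]
  refine (sum_le_sum fun k hk => ?_).trans (sum_le_sum_of_subset (subset_univ _))
  have hik : i ≠ k := by simpa [eq_comm] using hk
  rw [← card_compl_pair hik]
  refine (card_mul_minority_le _ _).trans (card_le_card ?_)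
  rintro ⟨j, l⟩ hjl
  simp only [mem_filter, mem_product, mem_univ, true_and] at hjl ⊢
  obtain ⟨⟨hj, hl⟩, hne⟩ := hjl
  refine ⟨sqDistinct4_iff.2 ⟨hik, mem_offDiag.2 ⟨hj, hl, fun h => hne (congrArg _ h)⟩⟩, ?_⟩
  rwa [← tri_mul_tri hsymm, Ne, mul_eq_one_iff_eq_inv, Int.units_inv_eq_self]

lemma exists_starSwitch_mul_card_le [Nonempty V] (hsymm : ∀ i j, f i j = f j i) :
    ∃ r θ, Fintype.card V * (Fintype.card V - 2)
        * #{t : V × V | t.1 ≠ t.2 ∧ f t.1 t.2 ≠ θ * starSwitch f r θ t.1 * starSwitch f r θ t.2}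
      ≤ 3 * #{t : V × V × V × V | SqDistinct4 t ∧
          f t.1 t.2.1 * f t.2.1 t.2.2.1 * f t.2.2.1 t.2.2.2 * f t.2.2.2 t.1 ≠ 1} := by
  obtain ⟨r, θ, hr⟩ := exists_card_mul_filter_tri_ne_le hsymm
  refine ⟨r, θ, ?_⟩
  calc Fintype.card V * (Fintype.card V - 2) * #{t : V × V | t.1 ≠ t.2 ∧
        f t.1 t.2 ≠ θ * starSwitch f r θ t.1 * starSwitch f r θ t.2}
      ≤ (Fintype.card V - 2) * (Fintype.card V
          * #{q ∈ ({r}ᶜ : Finset V).offDiag | tri f r q.1 q.2 ≠ θ}) := by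
        rw [mul_comm (Fintype.card V), mul_assoc]
        gcongr
        exact filter_ne_starSwitch_subset hsymm r θ
    _ ≤ (Fintype.card V - 2) * (3 * ∑ r, vertexDefect f r) := by gcongr
    _ ≤ _ := by
        rw [mul_left_comm]
        exact Nat.mul_le_mul_left 3 (sub_two_mul_sum_vertexDefect_le hsymm)

end Signs

lemma le_three_mul_of_mul_le {n b v : ℕ} {p : ℚ} (hn : 4 ≤ n) (hb : n * (n - 2) * b ≤ 3 * v)
    (hv : (v : ℚ) ≤ p * (n * (n - 1) * ((n - 2) * (n - 3)) : ℕ)) :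
    (b : ℚ) ≤ 3 * p * (n * (n - 1) : ℕ) := by
  have hn' : (4 : ℚ) ≤ n := by exact_mod_cast hn
  qify [show 2 ≤ n by omega] at hb
  push_cast [Nat.cast_sub (by omega : 1 ≤ n), Nat.cast_sub (by omega : 2 ≤ n),
    Nat.cast_sub (by omega : 3 ≤ n)] at hv ⊢
  have hpairs : 0 < (n : ℚ) * (n - 1) := by nlinarith
  have hpos : 0 < (n : ℚ) * (n - 2) := by nlinarith
  have hp : 0 ≤ p := by
    by_contra! hp
    nlinarith [mul_pos hpairs (by nlinarith : (0 : ℚ) < (n - 2) * (n - 3)), v.cast_nonneg (α := ℚ)]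
  refine le_of_mul_le_mul_left ?_ hpos
  calc (n : ℚ) * (n - 2) * b ≤ 3 * (p * (n * (n - 1) * ((n - 2) * (n - 3)))) := by linarith
    _ ≤ n * (n - 2) * (3 * p * (n * (n - 1))) := by nlinarith [mul_nonneg hp hpairs.le]

end SquareTest

open SquareTest

theorem stmt_19 {V : Type*} [Fintype V] [DecidableEq V] (h6 : 6 ≤ Fintype.card V)
    (f : V → V → ℤˣ) (hsymm : ∀ i j, f i j = f j i) (p : ℚ)
    (hp : ((Finset.univ.filter (fun t : V × V × V × V => SqDistinct4 t ∧
        f t.1 t.2.1 * f t.2.1 t.2.2.1 * f t.2.2.1 t.2.2.2 * f t.2.2.2 t.1 ≠ 1)).card : ℚ)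
      ≤ p * ((Finset.univ.filter (fun t : V × V × V × V => SqDistinct4 t)).card : ℚ)) :
    ∃ (θ : ℤˣ) (α : V → ℤˣ),
      ((Finset.univ.filter (fun t : V × V => t.1 ≠ t.2 ∧
          f t.1 t.2 ≠ θ * α t.1 * α t.2)).card : ℚ)
        ≤ 3 * p * ((Finset.univ.filter (fun t : V × V => t.1 ≠ t.2)).card : ℚ) := by
  have : Nonempty V := Fintype.card_pos_iff.mp (by omega)
  obtain ⟨r, θ, hr⟩ := exists_starSwitch_mul_card_le hsymm
  refine ⟨θ, starSwitch f r θ, ?_⟩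
  rw [card_sqDistinct4] at hp
  rw [card_filter_fst_ne_snd]
  exact le_three_mul_of_mul_le (by omega) hr hp
end
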